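/- (Theorem 2: monotonic improvement of federated policy iteration) Fix γ ∈ (0,1) and a reference policy π. For each agent n let ε_n = max_{s,a} |A_n(s,a)| and c_n = 4ε_nγ/(1−γ)², and suppose the local return η_n : (policies) → ℝ satisfies, for every policy π′, η_n(π′) ≥ η_n(π) + 𝔸_n(π′) − c_n · Σ_{s∈S} ρ_n(s) · D_TV(π(·|s) ‖ π′(·|s)). For each agent k define the penalized local objective h_k(σ) = 𝔸_k(σ) − (α_k + β) · Σ_{s∈S} ρ_k(s) · D_TV(π(·|s) ‖ σ(·|s)) − δ_k · max_{s∈S} D_TV(π(·|s) ‖ σ(·|s)), where α_k = 2‖B_k‖_F (the heterogeneity matrix B_k being taken with reference agent k), β = Σ_{n=1}^N q_n c_n, and δ_k = 2 Σ_{n=1}^N q_n c_n · (1/2) Σ_{s∈S} |ρ_n(s) − ρ_k(s)|. Note that h_k(π) = 0. If each local policy π_k satisfies h_k(π_k) ≥ 0 (in particular if π_k maximizes h_k over all policies), then the aggregated policy π̄(a|s) = Σ_{k=1}^N q_k π_k(a|s) satisfies Σ_{n=1}^N q_n η_n(π̄) ≥ Σ_{n=1}^N q_n η_n(π), i.e.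 the global return does not decrease. -/

import Mathlib

open Finset

/-- A (stochastic) policy: for each state `s`, `π s` is a probability
distribution over actions. -/
def IsPolicy {S A : Type*} [Fintype A] (π : S → A → ℝ) : Prop :=
  ∀ s, (∀ a, 0 ≤ π s a) ∧ ∑ a, π s a = 1

/-- Policy advantage `𝔸(σ) = Σ_s ρ(s) Σ_a σ(a|s) A(s,a)`. -/
noncomputable def policyAdv {S A : Type*} [Fintype S] [Fintype A]
    (ρ : S → ℝ) (Adv : S → A → ℝ) (σ : S → A → ℝ) : ℝ :=
  ∑ s, ρ s * ∑ a, σ s a * Adv s a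

/-- Frobenius norm of a matrix indexed by `S × A`. -/
noncomputable def frobNorm {S A : Type*} [Fintype S] [Fintype A]
    (M : S → A → ℝ) : ℝ :=
  Real.sqrt (∑ s, ∑ a, (M s a) ^ 2)

/-- Total-variation distance between two distributions on a finite set. -/
noncomputable def dTV {A : Type*} [Fintype A] (p q : A → ℝ) : ℝ :=
  (1 / 2) * ∑ a, |p a - q a|

/-- Heterogeneity matrix of agent `n`:
`B_n(s,a) = Σ_k q_k (ρ_k(s)/ρ_n(s)) A_k(s,a) − A_n(s,a)`. -/
noncomputable def hetMat {S A : Type*} [Fintype S] [Fintype A] (N : ℕ)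
    (q : Fin N → ℝ) (ρ : Fin N → S → ℝ) (Adv : Fin N → S → A → ℝ)
    (n : Fin N) : S → A → ℝ :=
  fun s a => (∑ k, q k * (ρ k s / ρ n s) * Adv k s a) - Adv n s a

/-- `D_TV^max(π,π') = max_s D_TV(π(·|s) ‖ π'(·|s))`. -/
noncomputable def dTVmax {S A : Type*} [Fintype S] [Fintype A] [Nonempty S]
    (π π' : S → A → ℝ) : ℝ :=
  Finset.univ.sup' Finset.univ_nonempty (fun s => dTV (π s) (π' s))

/-- `ε = max_{s,a} |A(s,a)|`. -/
noncomputable def maxAbs {S A : Type*} [Fintype S] [Fintype A] [Nonempty S]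
    [Nonempty A] (M : S → A → ℝ) : ℝ :=
  Finset.univ.sup' Finset.univ_nonempty (fun p : S × A => |M p.1 p.2|)

/-- `c = 4εγ/(1−γ)²`. -/
noncomputable def cCoef {S A : Type*} [Fintype S] [Fintype A] [Nonempty S]
    [Nonempty A] (γ : ℝ) (M : S → A → ℝ) : ℝ :=
  4 * maxAbs M * γ / (1 - γ) ^ 2

/-- The penalized local objective `h_k` of agent `k`:
`h_k(σ) = 𝔸_k(σ) − (α_k + β) Σ_s ρ_k(s) D_TV(π(·|s)‖σ(·|s))
  − δ_k D_TV^max(π,σ)`, where `α_k = 2‖B_k‖_F`, `β = Σ_n q_n c_n` and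
`δ_k = 2 Σ_n q_n c_n (1/2) Σ_s |ρ_n(s) − ρ_k(s)|`. -/
noncomputable def hObj {S A : Type*} [Fintype S] [Fintype A] [Nonempty S]
    [Nonempty A] (N : ℕ) (q : Fin N → ℝ) (γ : ℝ) (π : S → A → ℝ)
    (ρ : Fin N → S → ℝ) (Adv : Fin N → S → A → ℝ) (k : Fin N)
    (σ : S → A → ℝ) : ℝ :=
  policyAdv (ρ k) (Adv k) σ
    - (2 * frobNorm (hetMat N q ρ Adv k) + ∑ n, q n * cCoef γ (Adv n))
      * ∑ s, ρ k s * dTV (π s) (σ s)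
    - (2 * ∑ n, q n * cCoef γ (Adv n) * ((1 / 2) * ∑ s, |ρ n s - ρ k s|))
      * dTVmax π σ

/-!
The hypotheses on `η` say that `∑ n, q n * (η n σ - η n π)` is at least
`L σ = ∑ n, q n * (𝔸_n(σ) - c_n ∑ s, ρ_n(s) D_TV(π(·|s) ‖ σ(·|s)))`.
Since `𝔸_n` is linear and `D_TV` convex in `σ`, `L` is concave, so `L π̄ ≥ ∑ k, q k * L π_k`.
Each `L π_k` dominates `h_k(π_k) ≥ 0`: as `∑ n, q n ρ_n A_n = ρ_k (A_k + B_k)`, the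
heterogeneity part of `∑ n, q n 𝔸_n(π_k)` has `π`-mean zero and is therefore at least
`-2 ‖B_k‖_F` times the `ρ_k`-weighted TV distance, while replacing `ρ_n` by `ρ_k` in the penalty
costs at most `∑ s, |ρ_n(s) - ρ_k(s)|` times the maximal TV distance.
-/

section TotalVariation

variable {ι A : Type*} [Fintype ι] [Fintype A]

lemma dTV_nonneg (p p' : A → ℝ) : 0 ≤ dTV p p' := by
  unfold dTV
  positivity

lemma dTV_mixture_le {w : ι → ℝ} (hw : ∀ i, 0 ≤ w i) (hwsum : ∑ i, w i = 1)
    (p : A → ℝ) (f : ι → A → ℝ) :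
    dTV p (fun a => ∑ i, w i * f i a) ≤ ∑ i, w i * dTV p (f i) := by
  have hpoint : ∀ a, |p a - ∑ i, w i * f i a| ≤ ∑ i, w i * |p a - f i a| := fun a => by
    have hdiff : p a - ∑ i, w i * f i a = ∑ i, w i * (p a - f i a) := by
      simp only [mul_sub, sum_sub_distrib, ← sum_mul, hwsum, one_mul]
    rw [hdiff]
    refine (abs_sum_le_sum_abs _ _).trans_eq (sum_congr rfl fun i _ => ?_)
    rw [abs_mul, abs_of_nonneg (hw i)]
  calc dTV p (fun a => ∑ i, w i * f i a)
      ≤ 1 / 2 * ∑ a, ∑ i, w i * |p a - f i a| := by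
        unfold dTV
        gcongr with a
        exact hpoint a
    _ = ∑ i, w i * dTV p (f i) := by
        simp only [dTV, mul_sum]
        rw [sum_comm]
        exact sum_congr rfl fun i _ => sum_congr rfl fun a _ => by ring

lemma neg_two_mul_dTV_le_sum_mul {p p' B : A → ℝ} {C : ℝ} (hB : ∀ a, |B a| ≤ C)
    (hmean : ∑ a, p a * B a = 0) : -(2 * C * dTV p p') ≤ ∑ a, p' a * B a := by
  have hcentre : ∑ a, p' a * B a = ∑ a, (p' a - p a) * B a := by
    simp only [sub_mul, sum_sub_distrib, hmean, sub_zero]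
  calc -(2 * C * dTV p p') = ∑ a, -(|p a - p' a| * C) := by
        simp only [dTV, sum_neg_distrib, ← sum_mul]
        ring
    _ ≤ ∑ a, (p' a - p a) * B a := sum_le_sum fun a _ => by
        have habs : |(p' a - p a) * B a| ≤ |p a - p' a| * C := by
          rw [abs_mul, abs_sub_comm]
          exact mul_le_mul_of_nonneg_left (hB a) (abs_nonneg _)
        linarith [neg_abs_le ((p' a - p a) * B a)]
    _ = ∑ a, p' a * B a := hcentre.symm

end TotalVariation

section MaxBounds

variable {S A : Type*} [Fintype S] [Fintype A] [Nonempty S]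

lemma dTV_le_dTVmax (π π' : S → A → ℝ) (s : S) : dTV (π s) (π' s) ≤ dTVmax π π' :=
  le_sup' (fun s => dTV (π s) (π' s)) (mem_univ s)

lemma sum_mul_dTV_le_add_dTVmax (ρ ρ' : S → ℝ) (π σ : S → A → ℝ) :
    ∑ s, ρ' s * dTV (π s) (σ s)
      ≤ ∑ s, ρ s * dTV (π s) (σ s) + (∑ s, |ρ' s - ρ s|) * dTVmax π σ := by
  rw [sum_mul, ← sum_add_distrib]
  refine sum_le_sum fun s _ => ?_
  have h₁ := mul_nonneg (sub_nonneg.2 (le_abs_self (ρ' s - ρ s))) (dTV_nonneg (π s) (σ s))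
  have h₂ := mul_nonneg (abs_nonneg (ρ' s - ρ s)) (sub_nonneg.2 (dTV_le_dTVmax π σ s))
  linarith

variable [Nonempty A]

lemma maxAbs_nonneg (M : S → A → ℝ) : 0 ≤ maxAbs M :=
  let p : S × A := Classical.arbitrary _
  (abs_nonneg (M p.1 p.2)).trans (le_sup' (fun p : S × A => |M p.1 p.2|) (mem_univ p))

lemma cCoef_nonneg {γ : ℝ} (hγ : 0 ≤ γ) (M : S → A → ℝ) : 0 ≤ cCoef γ M := by
  have := maxAbs_nonneg M
  unfold cCoef
  positivity

end MaxBounds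

lemma abs_le_frobNorm {S A : Type*} [Fintype S] [Fintype A] (M : S → A → ℝ) (s : S) (a : A) :
    |M s a| ≤ frobNorm M := by
  rw [← Real.sqrt_sq_eq_abs]
  refine Real.sqrt_le_sqrt ?_
  calc M s a ^ 2 ≤ ∑ b, M s b ^ 2 :=
        single_le_sum (f := fun b => M s b ^ 2) (fun b _ => sq_nonneg _) (mem_univ a)
    _ ≤ ∑ t, ∑ b, M t b ^ 2 :=
        single_le_sum (f := fun t => ∑ b, M t b ^ 2)
          (fun t _ => sum_nonneg fun b _ => sq_nonneg _) (mem_univ s)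

lemma IsPolicy.mixture {ι S A : Type*} [Fintype ι] [Fintype A] {w : ι → ℝ}
    (hw : ∀ i, 0 ≤ w i) (hwsum : ∑ i, w i = 1) {f : ι → S → A → ℝ} (hf : ∀ i, IsPolicy (f i)) :
    IsPolicy (fun s a => ∑ i, w i * f i s a) := fun s =>
  ⟨fun a => sum_nonneg fun i _ => mul_nonneg (hw i) ((hf i s).1 a), by
    rw [sum_comm]
    simp only [← mul_sum, (hf _ s).2, mul_one, hwsum]⟩

section PolicyAdvantage

variable {ι S A : Type*} [Fintype ι] [Fintype S] [Fintype A]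

lemma policyAdv_mixture (ρ : S → ℝ) (Adv : S → A → ℝ) (w : ι → ℝ) (f : ι → S → A → ℝ) :
    policyAdv ρ Adv (fun s a => ∑ i, w i * f i s a) = ∑ i, w i * policyAdv ρ Adv (f i) := by
  simp only [policyAdv, sum_mul, mul_sum]
  conv_rhs => rw [sum_comm]
  refine sum_congr rfl fun s _ => ?_
  rw [sum_comm]
  exact sum_congr rfl fun a _ => sum_congr rfl fun i _ => by ring

lemma neg_two_frobNorm_mul_le_policyAdv {ρ : S → ℝ} (hρ : ∀ s, 0 ≤ ρ s) {π B : S → A → ℝ}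
    (hB : ∀ s, ∑ a, π s a * B s a = 0) (σ : S → A → ℝ) :
    -(2 * frobNorm B * ∑ s, ρ s * dTV (π s) (σ s)) ≤ policyAdv ρ B σ := by
  rw [mul_sum, ← sum_neg_distrib]
  refine sum_le_sum fun s _ => ?_
  calc -(2 * frobNorm B * (ρ s * dTV (π s) (σ s)))
      = ρ s * -(2 * frobNorm B * dTV (π s) (σ s)) := by ring
    _ ≤ ρ s * ∑ a, σ s a * B s a :=
        mul_le_mul_of_nonneg_left
          (neg_two_mul_dTV_le_sum_mul (fun a => abs_le_frobNorm B s a) (hB s)) (hρ s)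

end PolicyAdvantage

section Heterogeneity

variable {S A : Type*} [Fintype S] [Fintype A] {N : ℕ}

lemma sum_mul_hetMat_eq_zero (q : Fin N → ℝ) (ρ : Fin N → S → ℝ) {π : S → A → ℝ}
    {Adv : Fin N → S → A → ℝ} (hAdv : ∀ n s, ∑ a, π s a * Adv n s a = 0) (k : Fin N) (s : S) :
    ∑ a, π s a * hetMat N q ρ Adv k s a = 0 := by
  simp only [hetMat, mul_sub, mul_sum, sum_sub_distrib, hAdv, sub_zero]
  rw [sum_comm]
  refine sum_eq_zero fun n _ => ?_
  simp only [mul_left_comm (π s _), ← mul_sum, hAdv, mul_zero]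

lemma sum_mul_policyAdv_eq_policyAdv_add_hetMat (q : Fin N → ℝ) (ρ : Fin N → S → ℝ)
    (Adv : Fin N → S → A → ℝ) {k : Fin N} (hρk : ∀ s, ρ k s ≠ 0) (σ : S → A → ℝ) :
    ∑ n, q n * policyAdv (ρ n) (Adv n) σ
      = policyAdv (ρ k) (Adv k) σ + policyAdv (ρ k) (hetMat N q ρ Adv k) σ := by
  have hpool : ∀ s a, ρ k s * (Adv k s a + hetMat N q ρ Adv k s a)
      = ∑ n, q n * (ρ n s * Adv n s a) := fun s a => by
    simp only [hetMat, add_sub_cancel, mul_sum]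
    exact sum_congr rfl fun n _ => by field_simp [hρk s]
  calc ∑ n, q n * policyAdv (ρ n) (Adv n) σ
      = ∑ s, ∑ a, σ s a * ∑ n, q n * (ρ n s * Adv n s a) := by
        simp only [policyAdv, mul_sum]
        rw [sum_comm]
        refine sum_congr rfl fun s _ => ?_
        rw [sum_comm]
        exact sum_congr rfl fun a _ => sum_congr rfl fun n _ => by ring
    _ = ∑ s, ρ k s * ∑ a, σ s a * (Adv k s a + hetMat N q ρ Adv k s a) := by
        simp only [← hpool, mul_sum]
        exact sum_congr rfl fun s _ => sum_congr rfl fun a _ => by ring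
    _ = policyAdv (ρ k) (Adv k) σ + policyAdv (ρ k) (hetMat N q ρ Adv k) σ := by
        simp only [policyAdv, mul_add, sum_add_distrib]

end Heterogeneity

section ImprovementBound

variable {ι κ S A : Type*} [Fintype ι] [Fintype κ] [Fintype S] [Fintype A]

noncomputable def improvementBound (q c : ι → ℝ) (ρ : ι → S → ℝ) (Adv : ι → S → A → ℝ)
    (π σ : S → A → ℝ) : ℝ :=
  ∑ n, q n * (policyAdv (ρ n) (Adv n) σ - c n * ∑ s, ρ n s * dTV (π s) (σ s))

lemma sum_mul_improvementBound_le_mixture {q c : ι → ℝ} (hqc : ∀ n, 0 ≤ q n * c n)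
    {ρ : ι → S → ℝ} (hρ : ∀ n s, 0 ≤ ρ n s) (Adv : ι → S → A → ℝ) (π : S → A → ℝ)
    {w : κ → ℝ} (hw : ∀ k, 0 ≤ w k) (hwsum : ∑ k, w k = 1) (f : κ → S → A → ℝ) :
    ∑ k, w k * improvementBound q c ρ Adv π (f k)
      ≤ improvementBound q c ρ Adv π (fun s a => ∑ k, w k * f k s a) := by
  unfold improvementBound
  conv_lhs => enter [2, k]; rw [mul_sum]
  rw [sum_comm]
  refine sum_le_sum fun n _ => ?_
  have hdist : ∑ s, ρ n s * dTV (π s) (fun a => ∑ k, w k * f k s a)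
      ≤ ∑ k, w k * ∑ s, ρ n s * dTV (π s) (f k s) := by
    simp only [mul_sum]
    rw [sum_comm]
    refine sum_le_sum fun s _ => ?_
    simp only [mul_left_comm (w _), ← mul_sum]
    exact mul_le_mul_of_nonneg_left (dTV_mixture_le hw hwsum (π s) (f · s)) (hρ n s)
  have hsplit : ∑ k, w k * (q n * (policyAdv (ρ n) (Adv n) (f k)
        - c n * ∑ s, ρ n s * dTV (π s) (f k s)))
      = q n * ∑ k, w k * policyAdv (ρ n) (Adv n) (f k)
        - q n * c n * ∑ k, w k * ∑ s, ρ n s * dTV (π s) (f k s) := by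
    rw [mul_sum, mul_sum, ← sum_sub_distrib]
    exact sum_congr rfl fun k _ => by ring
  rw [hsplit, policyAdv_mixture]
  linarith [mul_le_mul_of_nonneg_left hdist (hqc n)]

end ImprovementBound

lemma hObj_le_improvementBound {S A : Type*} [Fintype S] [Fintype A] [Nonempty S] [Nonempty A]
    {N : ℕ} {q : Fin N → ℝ} (hq : ∀ n, 0 ≤ q n) {γ : ℝ} (hγ : 0 ≤ γ) (π : S → A → ℝ)
    {ρ : Fin N → S → ℝ} (hρ : ∀ n s, 0 < ρ n s) {Adv : Fin N → S → A → ℝ}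
    (hAdv : ∀ n s, ∑ a, π s a * Adv n s a = 0) (k : Fin N) (σ : S → A → ℝ) :
    hObj N q γ π ρ Adv k σ ≤ improvementBound q (fun n => cCoef γ (Adv n)) ρ Adv π σ := by
  have hqc : ∀ n, 0 ≤ q n * cCoef γ (Adv n) := fun n => mul_nonneg (hq n) (cCoef_nonneg hγ _)
  have hadv := sum_mul_policyAdv_eq_policyAdv_add_hetMat q ρ Adv (fun s => (hρ k s).ne') σ
  have hrem := neg_two_frobNorm_mul_le_policyAdv (fun s => (hρ k s).le)
    (sum_mul_hetMat_eq_zero q ρ hAdv k) σ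
  have hpenalty : ∑ n, q n * cCoef γ (Adv n) * ∑ s, ρ n s * dTV (π s) (σ s)
      ≤ (∑ n, q n * cCoef γ (Adv n)) * ∑ s, ρ k s * dTV (π s) (σ s)
        + (∑ n, q n * cCoef γ (Adv n) * ∑ s, |ρ n s - ρ k s|) * dTVmax π σ := by
    rw [sum_mul, sum_mul, ← sum_add_distrib]
    refine sum_le_sum fun n _ => ?_
    have := mul_le_mul_of_nonneg_left (sum_mul_dTV_le_add_dTVmax (ρ k) (ρ n) π σ) (hqc n)
    linarith
  have hδ : 2 * ∑ n, q n * cCoef γ (Adv n) * ((1 / 2) * ∑ s, |ρ n s - ρ k s|)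
      = ∑ n, q n * cCoef γ (Adv n) * ∑ s, |ρ n s - ρ k s| := by
    rw [mul_sum]
    exact sum_congr rfl fun n _ => by ring
  have hbound : improvementBound q (fun n => cCoef γ (Adv n)) ρ Adv π σ
      = ∑ n, q n * policyAdv (ρ n) (Adv n) σ
        - ∑ n, q n * cCoef γ (Adv n) * ∑ s, ρ n s * dTV (π s) (σ s) := by
    simp only [improvementBound, mul_sub, sum_sub_distrib, mul_assoc]
  rw [hObj, hδ, hbound, hadv]
  linarith

theorem monotonic_improvement_general {S A : Type*} [Fintype S] [Fintype A]
    [Nonempty S] [Nonempty A]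
    (N : ℕ) (q : Fin N → ℝ) (hq : ∀ k, 0 ≤ q k) (hqsum : ∑ k, q k = 1)
    (γ : ℝ) (hγ0 : 0 < γ)
    (π : S → A → ℝ)
    (ρ : Fin N → S → ℝ) (hρ : ∀ k s, 0 < ρ k s)
    (Adv : Fin N → S → A → ℝ)
    (hAdv : ∀ k s, ∑ a, π s a * Adv k s a = 0)
    (η : Fin N → (S → A → ℝ) → ℝ)
    (hη : ∀ n, ∀ π' : S → A → ℝ, IsPolicy π' →
      η n π' ≥ η n π + policyAdv (ρ n) (Adv n) π'
        - cCoef γ (Adv n) * ∑ s, ρ n s * dTV (π s) (π' s))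
    (πs : Fin N → S → A → ℝ) (hπs : ∀ k, IsPolicy (πs k))
    (hpos : ∀ k, 0 ≤ hObj N q γ π ρ Adv k (πs k)) :
    ∑ n, q n * η n (fun s a => ∑ k, q k * πs k s a)
      ≥ ∑ n, q n * η n π := by
  set πbar : S → A → ℝ := fun s a => ∑ k, q k * πs k s a
  set L := improvementBound q (fun n => cCoef γ (Adv n)) ρ Adv π
  have hL : 0 ≤ L πbar := by
    refine (sum_nonneg fun k _ => mul_nonneg (hq k) ?_).trans
      (sum_mul_improvementBound_le_mixture (fun n => mul_nonneg (hq n) (cCoef_nonneg hγ0.le _))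
        (fun n s => (hρ n s).le) Adv π hq hqsum πs)
    exact (hpos k).trans (hObj_le_improvementBound hq hγ0.le π hρ hAdv k (πs k))
  calc ∑ n, q n * η n π ≤ ∑ n, q n * η n π + L πbar := le_add_of_nonneg_right hL
    _ = ∑ n, q n * (η n π + policyAdv (ρ n) (Adv n) πbar
          - cCoef γ (Adv n) * ∑ s, ρ n s * dTV (π s) (πbar s)) := by
        simp only [L, improvementBound, ← sum_add_distrib]
        exact sum_congr rfl fun n _ => by ring
    _ ≤ ∑ n, q n * η n πbar := sum_le_sum fun n _ =>
        mul_le_mul_of_nonneg_left (hη n πbar (IsPolicy.mixture hq hqsum hπs)) (hq n)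

/-- Theorem 2, monotonic improvement of federated policy
iteration: if each local policy `π_k` satisfies `h_k(π_k) ≥ 0`, then the
aggregated policy `π̄ = Σ_k q_k π_k` does not decrease the global return:
`Σ_n q_n η_n(π̄) ≥ Σ_n q_n η_n(π)`. -/
theorem monotonic_improvement {S A : Type*} [Fintype S] [Fintype A]
    [Nonempty S] [Nonempty A]
    (N : ℕ) (q : Fin N → ℝ) (hq : ∀ k, 0 ≤ q k) (hqsum : ∑ k, q k = 1)
    (γ : ℝ) (hγ0 : 0 < γ) (hγ1 : γ < 1)
    (π : S → A → ℝ) (hπ : IsPolicy π)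
    (ρ : Fin N → S → ℝ) (hρ : ∀ k s, 0 < ρ k s)
    (Adv : Fin N → S → A → ℝ)
    (hAdv : ∀ k s, ∑ a, π s a * Adv k s a = 0)
    (η : Fin N → (S → A → ℝ) → ℝ)
    (hη : ∀ n, ∀ π' : S → A → ℝ, IsPolicy π' →
      η n π' ≥ η n π + policyAdv (ρ n) (Adv n) π'
        - cCoef γ (Adv n) * ∑ s, ρ n s * dTV (π s) (π' s))
    (πs : Fin N → S → A → ℝ) (hπs : ∀ k, IsPolicy (πs k))
    (hpos : ∀ k, 0 ≤ hObj N q γ π ρ Adv k (πs k)) :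
    ∑ n, q n * η n (fun s a => ∑ k, q k * πs k s a)
      ≥ ∑ n, q n * η n π :=
  monotonic_improvement_general N q hq hqsum γ hγ0 π ρ hρ Adv hAdv η hη πs hπs hpos
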